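/- For each k ∈ {0,1,2,3} and all natural numbers p, q with p ≠ 0, q ≠ 0 and p ≠ q, the Cayley–Dickson twist is antisymmetric: ω_k(p,q) = −ω_k(q,p). -/

import Mathlib

/-- The five states of the Cayley–Dickson twist tree:
corner (C), top (T), left (L), diagonal (D) and interior (I). -/
inductive TwistState : Type
  | C | T | L | D | I
deriving DecidableEq

open TwistState

/-- The interior-node sign `i_k(a,b)` for the doubling product `P_k`, `k ∈ {0,1,2,3}`. -/
def iTwist (k : ℕ) (a b : Bool) : ℤ :=
  match k with
  | 0 => if a = false ∧ b = false then -1 else 1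
  | 1 => -1
  | 2 => 1
  | _ => if a = false ∧ b = false then 1 else -1

/-- One step of the twist-tree finite-state computation: from the current
(state, sign) pair, read a doublet of bits `(a, b)` and move to the new
(state, sign) pair. -/
def twistStep (k : ℕ) : TwistState × ℤ → Bool × Bool → TwistState × ℤ
  | (C, s), (false, false) => (C, s)
  | (C, s), (false, true)  => (T, s)
  | (C, s), (true, false)  => (L, s)
  | (C, s), (true, true)   => (D, -s)
  | (T, s), (false, false) => (T, s)
  | (T, s), (false, true)  => (T, s)
  | (T, s), (true, false)  => (I, s)
  | (T, s), (true, true)   => (I, -s)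
  | (L, s), (false, false) => (L, s)
  | (L, s), (false, true)  => (I, -s)
  | (L, s), (true, false)  => (L, s)
  | (L, s), (true, true)   => (I, s)
  | (D, s), (false, false) => (D, s)
  | (D, s), (false, true)  => (I, -s)
  | (D, s), (true, false)  => (I, s)
  | (D, s), (true, true)   => (D, s)
  | (I, s), (a, b)         => (I, s * iTwist k a b)

/-- The Cayley–Dickson twist `ω_k(p,q)` for the doubling product `P_k`:
write `p` and `q` in binary with a common number of bits (padding with
leading zeros), read the doublets of bits from most significant to least
significant, running the twist-tree automaton starting at state `C` with
sign `+1`; the result is the final sign. -/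
def omegaTwist (k : ℕ) (p q : ℕ) : ℤ :=
  (((List.range (max (Nat.size p) (Nat.size q))).reverse.map
      (fun i => (p.testBit i, q.testBit i))).foldl (twistStep k) (C, 1)).2


/-!
Swapping `p` and `q` transposes every doublet. The automaton commutes with the involution that
exchanges the states `T` and `L` and negates the sign in state `I` (the other cases of the
transition table are symmetric, and so is `i_k`), so `ω_k(q,p) = -ω_k(p,q)` as soon as the run
on `(p,q)` ends in `I`. A run that never reaches `I` reads only doublets with `a = 0`
(states `C`, `T`), `b = 0` (state `L`) or `a = b` (state `D`), which forces `p = 0`, `q = 0`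
or `p = q`.
-/

lemma iTwist_comm (k : ℕ) (a b : Bool) : iTwist k a b = iTwist k b a := by
  rcases k with _ | _ | _ | k <;> cases a <;> cases b <;> simp [iTwist]

def twistDoublets (p q : ℕ) : List (Bool × Bool) :=
  (List.range (max p.size q.size)).reverse.map fun i => (p.testBit i, q.testBit i)

lemma omegaTwist_eq (k p q : ℕ) :
    omegaTwist k p q = ((twistDoublets p q).foldl (twistStep k) (C, 1)).2 :=
  rfl

lemma twistDoublets_comm (p q : ℕ) : twistDoublets q p = (twistDoublets p q).map Prod.swap := by
  simp [twistDoublets, max_comm, List.map_map, Function.comp_def]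

lemma mem_twistDoublets {p q i : ℕ} (hi : i < max p.size q.size) :
    (p.testBit i, q.testBit i) ∈ twistDoublets p q :=
  List.mem_map.mpr ⟨i, by simpa using hi, rfl⟩

def twistTranspose : TwistState × ℤ → TwistState × ℤ
  | (T, s) => (L, s)
  | (L, s) => (T, s)
  | (I, s) => (I, -s)
  | x => x

lemma twistStep_transpose (k : ℕ) (x : TwistState × ℤ) (d : Bool × Bool) :
    twistStep k (twistTranspose x) d.swap = twistTranspose (twistStep k x d) := by
  obtain ⟨s, σ⟩ := x
  obtain ⟨a, b⟩ := d
  cases s <;> cases a <;> cases b <;> simp [twistStep, twistTranspose, iTwist_comm]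

lemma foldl_twistStep_map_swap (k : ℕ) (l : List (Bool × Bool)) (x : TwistState × ℤ) :
    (l.map Prod.swap).foldl (twistStep k) (twistTranspose x) =
      twistTranspose (l.foldl (twistStep k) x) := by
  rw [List.foldl_map]
  exact List.foldl_hom _ fun x d => twistStep_transpose k x d

lemma twistTranspose_of_fst_eq_I {x : TwistState × ℤ} (hx : x.1 = I) :
    twistTranspose x = (I, -x.2) := by
  obtain ⟨s, σ⟩ := x
  subst hx
  rfl

/-- The doublets that a run from `C` ending in the given state can have read. -/
def TwistState.Admits : TwistState → Bool × Bool → Prop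
  | C, d => d = (false, false)
  | T, d => d.1 = false
  | L, d => d.2 = false
  | D, d => d.1 = d.2
  | I, _ => True

lemma TwistState.admits_false_false (s : TwistState) : s.Admits (false, false) := by
  cases s <;> simp [TwistState.Admits]

lemma twistStep_admits (k : ℕ) (x : TwistState × ℤ) (d : Bool × Bool) :
    (twistStep k x d).1.Admits d ∧ ∀ e, x.1.Admits e → (twistStep k x d).1.Admits e := by
  obtain ⟨s, σ⟩ := x
  obtain ⟨a, b⟩ := d
  cases s <;> cases a <;> cases b <;> simp [twistStep, TwistState.Admits]

lemma admits_foldl_of_mem (k : ℕ) (σ : ℤ) (l : List (Bool × Bool)) :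
    ∀ d ∈ l, (l.foldl (twistStep k) (C, σ)).1.Admits d := by
  induction l using List.reverseRecOn with
  | nil => simp
  | append_singleton l d ih =>
    obtain ⟨hd, hmono⟩ := twistStep_admits k (l.foldl (twistStep k) (C, σ)) d
    intro e he
    rw [List.foldl_append, List.foldl_cons, List.foldl_nil]
    rcases List.mem_append.mp he with he | he
    · exact hmono e (ih e he)
    · rwa [List.mem_singleton.mp he]

lemma foldl_twistDoublets_fst_eq_I (k : ℕ) {p q : ℕ} (hp : p ≠ 0) (hq : q ≠ 0) (hpq : p ≠ q) :
    ((twistDoublets p q).foldl (twistStep k) (C, 1)).1 = I := by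
  have hbits : ∀ i, ((twistDoublets p q).foldl (twistStep k) (C, 1)).1.Admits
      (p.testBit i, q.testBit i) := by
    intro i
    rcases lt_or_ge i (max p.size q.size) with hi | hi
    · exact admits_foldl_of_mem k 1 _ _ (mem_twistDoublets hi)
    · rw [max_le_iff, Nat.size_le, Nat.size_le] at hi
      rw [Nat.testBit_lt_two_pow hi.1, Nat.testBit_lt_two_pow hi.2]
      exact TwistState.admits_false_false _
  generalize ((twistDoublets p q).foldl (twistStep k) (C, 1)).1 = s at hbits ⊢
  cases s
  case C => exact absurd (Nat.zero_of_testBit_eq_false fun i => (Prod.ext_iff.mp (hbits i)).1) hp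
  case T => exact absurd (Nat.zero_of_testBit_eq_false hbits) hp
  case L => exact absurd (Nat.zero_of_testBit_eq_false hbits) hq
  case D => exact absurd (Nat.eq_of_testBit_eq hbits) hpq
  case I => rfl

/-- For each `k ∈ {0,1,2,3}` and all natural numbers `p, q` with `p ≠ 0`,
`q ≠ 0` and `p ≠ q`, the Cayley–Dickson twist is antisymmetric:
`ω_k(p,q) = -ω_k(q,p)`. -/
theorem omegaTwist_antisymm :
    ∀ k ∈ ({0, 1, 2, 3} : Finset ℕ), ∀ p q : ℕ, p ≠ 0 → q ≠ 0 → p ≠ q →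
      omegaTwist k p q = -omegaTwist k q p := by
  intro k _ p q hp hq hpq
  have hswap : (twistDoublets q p).foldl (twistStep k) (C, 1) =
      twistTranspose ((twistDoublets p q).foldl (twistStep k) (C, 1)) := by
    rw [twistDoublets_comm, ← foldl_twistStep_map_swap]
    rfl
  rw [omegaTwist_eq, omegaTwist_eq, hswap,
    twistTranspose_of_fst_eq_I (foldl_twistDoublets_fst_eq_I k hp hq hpq), neg_neg]
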